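/- Abstract propositional Herbrand theorem: Let `atom` be a countable type (with decidable equality) and `index` a countable type, and let `Th : index → compound` where compounds are Boolean combinations of atoms. If for every total valuation `val : atom → Bool` there exists `i : index` such that `Th i` evaluates to false under `val`, then there exists a finite binary tree `t` with internal nodes labeled by atoms and leaves labeled by indices such that for every leaf, the compound at that leaf evaluates to `some false` under the partial valuation determined by the path from the root to the leaf. -/

import Mathlib

inductive Compound (atom : Type) : Type where
  | Atomic : atom → Compound atom
  | And : Compound atom → Compound atom → Compound atom
  | Or : Compound atom → Compound atom → Compound atom
  | Not : Compound atom → Compound atom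

variable {atom index : Type}

/-- Total Boolean evaluation of a compound. -/
def cEval (val : atom → Bool) : Compound atom → Bool
  | .Atomic a => val a
  | .And c d => cEval val c && cEval val d
  | .Or c d => cEval val c || cEval val d
  | .Not c => !cEval val c

/-- A path is a finite partial Boolean valuation on atoms. -/
abbrev PPath (atom : Type) : Type := List (atom × Bool)

/-- Lookup of an atom in a path. -/
def findA [DecidableEq atom] (p : PPath atom) (a : atom) : Option Bool :=
  (p.find? (fun x => x.1 = a)).map Prod.snd

/-- Strict partial evaluation of a compound under a path. -/
def pEval [DecidableEq atom] (p : PPath atom) : Compound atom → Option Bool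
  | .Atomic a => findA p a
  | .And c d =>
      match pEval p c, pEval p d with
      | some x, some y => some (x && y)
      | _, _ => none
  | .Or c d =>
      match pEval p c, pEval p d with
      | some x, some y => some (x || y)
      | _, _ => none
  | .Not c => (pEval p c).map (fun b => !b)

/-- The list of atoms occurring in a compound. -/
def atomsOf : Compound atom → List atom
  | .Atomic a => [a]
  | .And c d => atomsOf c ++ atomsOf d
  | .Or c d => atomsOf c ++ atomsOf d
  | .Not c => atomsOf c

/-- Herbrand trees: leaves carry indices, nodes carry atoms. -/
inductive HTree (atom index : Type) : Type where
  | Contrad : index → HTree atom index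
  | Exp : atom → HTree atom index → HTree atom index → HTree atom index

/-- Checker that `t` is a correct Herbrand tree relative to a starting path `p`. -/
def HtreeAt [DecidableEq atom] (Th : index → Compound atom) (p : PPath atom) :
    HTree atom index → Bool
  | .Contrad i => pEval p (Th i) == some false
  | .Exp a t₁ t₂ =>
      (findA p a == none) && HtreeAt Th ((a, true) :: p) t₁
        && HtreeAt Th ((a, false) :: p) t₂

/-- Checker that `t` is a Herbrand tree for the theory `Th`. -/
def Htree [DecidableEq atom] (Th : index → Compound atom) (t : HTree atom index) : Bool :=
  HtreeAt Th [] t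

/-- `q` extends `p` as a partial valuation. -/
def PathExtends [DecidableEq atom] (q p : PPath atom) : Prop :=
  ∀ a b, findA p a = some b → findA q a = some b

/-- A total valuation `val` extends the path `p`. -/
def ValExtends [DecidableEq atom] (val : atom → Bool) (p : PPath atom) : Prop :=
  ∀ a b, findA p a = some b → val a = b

/-- The `good` predicate: reflects the existence of a Herbrand sub-tree below `p`. -/
inductive good [DecidableEq atom] (Th : index → Compound atom) : PPath atom → Prop where
  | good_leaf : ∀ p i, pEval p (Th i) = some false → good Th p
  | good_node : ∀ p a, findA p a = none → good Th ((a, true) :: p) →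
      good Th ((a, false) :: p) → good Th p


/-!
Propositional compactness: valuations form the compact space `atom → Bool`, and each
`{val | cEval val (Th i) = false}` is open, so finitely many `Th i` already refute every
valuation. Their atoms form a finite list `L`; branching on the atoms of `L` one after the other
gives a tree whose every leaf path assigns all of `L`, hence fully evaluates one of those
finitely many `Th i` to `false`.
-/

theorem continuous_cEval (c : Compound atom) : Continuous fun val : atom → Bool => cEval val c := by
  induction c with
  | Atomic a => exact continuous_apply a
  | And c d hc hd =>
    exact (continuous_of_discreteTopology (f := fun x : Bool × Bool => x.1 && x.2)).comp
      (hc.prodMk hd)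
  | Or c d hc hd =>
    exact (continuous_of_discreteTopology (f := fun x : Bool × Bool => x.1 || x.2)).comp
      (hc.prodMk hd)
  | Not c hc => exact (continuous_of_discreteTopology (f := not)).comp hc

theorem exists_finset_forall_exists_cEval_eq_false (Th : index → Compound atom)
    (hU : ∀ val : atom → Bool, ∃ i, cEval val (Th i) = false) :
    ∃ I : Finset index, ∀ val : atom → Bool, ∃ i ∈ I, cEval val (Th i) = false := by
  obtain ⟨I, hI⟩ := isCompact_univ.elim_finite_subcover
    (fun i => (fun val : atom → Bool => cEval val (Th i)) ⁻¹' {false})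
    (fun i => (continuous_cEval (Th i)).isOpen_preimage _ (isOpen_discrete _))
    (fun val _ => Set.mem_iUnion.2 (hU val))
  exact ⟨I, fun val => by simpa using hI (Set.mem_univ val)⟩

section Paths

variable [DecidableEq atom]

theorem findA_cons (x a : atom) (b : Bool) (p : PPath atom) :
    findA ((x, b) :: p) a = if x = a then some b else findA p a := by
  by_cases h : x = a <;> simp [findA, h]

theorem ValExtends.of_cons {val : atom → Bool} {a : atom} {b : Bool} {p : PPath atom}
    (h : ValExtends val ((a, b) :: p)) (ha : findA p a = none) : ValExtends val p := by
  intro x c hx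
  have hax : a ≠ x := by rintro rfl; simp [ha] at hx
  exact h x c (by rwa [findA_cons, if_neg hax])

theorem pEval_eq_some_cEval (p : PPath atom) (val : atom → Bool) (c : Compound atom)
    (h : ∀ a ∈ atomsOf c, findA p a = some (val a)) : pEval p c = some (cEval val c) := by
  induction c with
  | Atomic a => simpa [pEval, cEval] using h a (by simp [atomsOf])
  | And c d ihc ihd =>
    rw [pEval, ihc fun a ha => h a (by simp [atomsOf, ha]),
      ihd fun a ha => h a (by simp [atomsOf, ha])]
    rfl
  | Or c d ihc ihd =>
    rw [pEval, ihc fun a ha => h a (by simp [atomsOf, ha]),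
      ihd fun a ha => h a (by simp [atomsOf, ha])]
    rfl
  | Not c ihc =>
    rw [pEval, ihc fun a ha => h a (by simp [atomsOf, ha])]
    rfl

def RefutedWithin (Th : index → Compound atom) (L : List atom) (p : PPath atom) : Prop :=
  ∀ val, ValExtends val p → ∃ i, cEval val (Th i) = false ∧
    ∀ a ∈ atomsOf (Th i), a ∈ L ∨ findA p a = some (val a)

variable {Th : index → Compound atom} {a : atom} {L : List atom} {p : PPath atom}

theorem RefutedWithin.good_of_nil (h : RefutedWithin Th [] p) : good Th p := by
  obtain ⟨i, hi, hatoms⟩ := h (fun a => (findA p a).getD true) fun a b hab => by simp [hab]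
  refine good.good_leaf p i ?_
  rw [pEval_eq_some_cEval p _ _ fun a ha => (hatoms a ha).resolve_left List.not_mem_nil, hi]

theorem RefutedWithin.of_cons_of_findA_eq_some {b : Bool} (h : RefutedWithin Th (a :: L) p)
    (hpa : findA p a = some b) : RefutedWithin Th L p := by
  intro val hval
  obtain ⟨i, hi, hatoms⟩ := h val hval
  refine ⟨i, hi, fun x hx => ?_⟩
  obtain (rfl | hxL) | hpx := (hatoms x hx).imp_left List.mem_cons.1
  · exact .inr (by rw [hpa, hval x b hpa])
  · exact .inl hxL
  · exact .inr hpx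

theorem RefutedWithin.extend_of_findA_eq_none (b : Bool) (h : RefutedWithin Th (a :: L) p)
    (hpa : findA p a = none) : RefutedWithin Th L ((a, b) :: p) := by
  intro val hval
  obtain ⟨i, hi, hatoms⟩ := h val (hval.of_cons hpa)
  refine ⟨i, hi, fun x hx => ?_⟩
  rw [findA_cons]
  obtain (rfl | hxL) | hpx := (hatoms x hx).imp_left List.mem_cons.1
  · exact .inr (by rw [if_pos rfl, hval x b (by rw [findA_cons, if_pos rfl])])
  · exact .inl hxL
  · by_cases hax : a = x
    · simp [← hax, hpa] at hpx
    · exact .inr (by rwa [if_neg hax])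

theorem RefutedWithin.good (h : RefutedWithin Th L p) : good Th p := by
  induction L generalizing p with
  | nil => exact h.good_of_nil
  | cons a L ih =>
    cases hpa : findA p a with
    | some b => exact ih (h.of_cons_of_findA_eq_some hpa)
    | none =>
      exact good.good_node p a hpa (ih (h.extend_of_findA_eq_none true hpa)) (ih (h.extend_of_findA_eq_none false hpa))

theorem exists_htreeAt_of_good (h : good Th p) :
    ∃ t : HTree atom index, HtreeAt Th p t = true := by
  induction h with
  | good_leaf p i hp => exact ⟨.Contrad i, by simp [HtreeAt, hp]⟩
  | good_node p a ha _ _ ih₁ ih₂ =>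
    obtain ⟨t₁, h₁⟩ := ih₁
    obtain ⟨t₂, h₂⟩ := ih₂
    exact ⟨.Exp a t₁ t₂, by simp [HtreeAt, ha, h₁, h₂]⟩

end Paths

theorem herbrand_bool_general {atom index : Type} [DecidableEq atom] (Th : index → Compound atom)
    (hU : ∀ val : atom → Bool, ∃ i : index, cEval val (Th i) = false) :
    ∃ t : HTree atom index, Htree Th t = true := by
  obtain ⟨I, hI⟩ := exists_finset_forall_exists_cEval_eq_false Th hU
  let L := I.toList.flatMap fun i => atomsOf (Th i)
  have hL : RefutedWithin Th L [] := fun val _ => by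
    obtain ⟨i, hiI, hi⟩ := hI val
    exact ⟨i, hi, fun a ha => .inl (List.mem_flatMap.2 ⟨i, Finset.mem_toList.2 hiI, ha⟩)⟩
  exact exists_htreeAt_of_good hL.good

/-- abstract propositional Herbrand theorem. -/
theorem herbrand_bool {atom index : Type} [DecidableEq atom] [Countable atom]
    [Countable index] (Th : index → Compound atom)
    (hU : ∀ val : atom → Bool, ∃ i : index, cEval val (Th i) = false) :
    ∃ t : HTree atom index, Htree Th t = true :=
  herbrand_bool_general Th hU
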